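/- Let F be an algebraically closed field of characteristic zero and let P be an A-submodule of Aᵏ. Then there exists a subgroup S of ℤⁿ such that: (a) P = (P^c_S)^e, i.e. P equals the extension of its contraction to A_Sᵏ; and (b) for every subgroup T of ℤⁿ with P = (P^c_T)^e, one has S ⊆ T. Such a subgroup S is unique (it is the coarsest sublattice of definition of the system defined by P); S is the trivial subgroup 0 exactly when P is generated as an A-module by vectors in Fᵏ ⊆ Aᵏ, and otherwise S has rank at least 1. -/

import Mathlib

open scoped BigOperators

set_option synthInstance.maxHeartbeats 1000000
set_option maxHeartbeats 1000000

/-- The ring of Laurent polynomials in `n` variables over `F`: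
the group algebra of the lattice `ℤⁿ`. -/
abbrev LaurentAlg (F : Type*) [Field F] (n : ℕ) : Type _ :=
  AddMonoidAlgebra F (Fin n → ℤ)

/-- The monomial `σ^x`. -/
noncomputable def mono (F : Type*) [Field F] {n : ℕ} (x : Fin n → ℤ) : LaurentAlg F n :=
  AddMonoidAlgebra.single x 1

/-- `A_S`: the `F`-subalgebra of `A` spanned (generated) by the monomials `σ^x`, `x ∈ S`. -/
noncomputable def monoAlg (F : Type*) [Field F] {n : ℕ} (S : AddSubgroup (Fin n → ℤ)) :
    Subalgebra F (LaurentAlg F n) :=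
  Algebra.adjoin F {a : LaurentAlg F n | ∃ x ∈ S, a = mono F x}

/-- The diagonal sublattice `L_d = {x : dᵢ ∣ xᵢ for all i}`. -/
def diagLattice (n : ℕ) (d : Fin n → ℕ) : AddSubgroup (Fin n → ℤ) where
  carrier := {x | ∀ i, (d i : ℤ) ∣ x i}
  zero_mem' := fun i => dvd_zero _
  add_mem' := fun hx hy i => dvd_add (hx i) (hy i)
  neg_mem' := fun hx i => dvd_neg.mpr (hx i)

/-- The coordinatewise inclusion `ι : Bᵏ → Aᵏ` for a subalgebra `B ⊆ A`,
as a `B`-linear map. -/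
noncomputable def inclMap {F : Type*} [Field F] {n : ℕ} (B : Subalgebra F (LaurentAlg F n))
    (k : ℕ) : (Fin k → B) →ₗ[B] (Fin k → LaurentAlg F n) :=
  LinearMap.pi fun i => (Algebra.linearMap B (LaurentAlg F n)).comp (LinearMap.proj i)

/-- The contraction `P^c = P ∩ Bᵏ` of an `A`-submodule `P ⊆ Aᵏ`. -/
noncomputable def contrTo {F : Type*} [Field F] {n : ℕ} (B : Subalgebra F (LaurentAlg F n))
    {k : ℕ} (P : Submodule (LaurentAlg F n) (Fin k → LaurentAlg F n)) :
    Submodule B (Fin k → B) :=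
  Submodule.comap (inclMap B k) (Submodule.restrictScalars B P)

/-- The extension `Q^e ⊆ Aᵏ` of a `B`-submodule `Q ⊆ Bᵏ`: the `A`-submodule generated
by `ι(Q)`. -/
noncomputable def extendTo {F : Type*} [Field F] {n : ℕ} (B : Subalgebra F (LaurentAlg F n))
    {k : ℕ} (Q : Submodule B (Fin k → B)) :
    Submodule (LaurentAlg F n) (Fin k → LaurentAlg F n) :=
  Submodule.span (LaurentAlg F n) (inclMap B k '' Q)

section Aux

variable {F : Type*} [Field F] {n k : ℕ}

open AddMonoidAlgebra

/-- Component map: restrict support to the coset `c + T`. -/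
noncomputable def lcomp (T : AddSubgroup (Fin n → ℤ)) (c : Fin n → ℤ) :
    LaurentAlg F n →+ LaurentAlg F n :=
  (AddMonoidAlgebra.coeffAddEquiv (R := F) (M := Fin n → ℤ)).symm.toAddMonoidHom.comp
    ((@Finsupp.filterAddHom (Fin n → ℤ) F _ (fun x => x - c ∈ T) (Classical.decPred _)).comp
      (AddMonoidAlgebra.coeffAddEquiv (R := F) (M := Fin n → ℤ)).toAddMonoidHom)


lemma lcomp_def (T : AddSubgroup (Fin n → ℤ)) (c : Fin n → ℤ) (a : LaurentAlg F n) :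
    lcomp T c a = AddMonoidAlgebra.ofCoeff
      (@Finsupp.filter _ _ _ (fun x => x - c ∈ T) (Classical.decPred _) a.coeff) := rfl

lemma lcomp_apply_of_mem {T : AddSubgroup (Fin n → ℤ)} {c y : Fin n → ℤ}
    (h : y - c ∈ T) (a : LaurentAlg F n) : (lcomp T c a).coeff y = a.coeff y := by
  rw [lcomp_def]
  exact @Finsupp.filter_apply_pos (Fin n → ℤ) F _ (fun x => x - c ∈ T) (Classical.decPred _) a.coeff y h

lemma lcomp_apply_of_not_mem {T : AddSubgroup (Fin n → ℤ)} {c y : Fin n → ℤ}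
    (h : ¬ y - c ∈ T) (a : LaurentAlg F n) : (lcomp T c a).coeff y = 0 := by
  rw [lcomp_def]
  exact @Finsupp.filter_apply_neg (Fin n → ℤ) F _ (fun x => x - c ∈ T) (Classical.decPred _) a.coeff y h

lemma lcomp_top (c : Fin n → ℤ) (a : LaurentAlg F n) : lcomp ⊤ c a = a := by
  ext y; exact lcomp_apply_of_mem (AddSubgroup.mem_top _) a

lemma lcomp_inf (T T' : AddSubgroup (Fin n → ℤ)) (c : Fin n → ℤ) (a : LaurentAlg F n) :
    lcomp (T ⊓ T') c a = lcomp T c (lcomp T' c a) := by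
  ext y
  by_cases h1 : y - c ∈ T
  · by_cases h2 : y - c ∈ T'
    · rw [lcomp_apply_of_mem (AddSubgroup.mem_inf.mpr ⟨h1, h2⟩),
        lcomp_apply_of_mem h1, lcomp_apply_of_mem h2]
    · rw [lcomp_apply_of_not_mem (fun h => h2 (AddSubgroup.mem_inf.mp h).2),
        lcomp_apply_of_mem h1, lcomp_apply_of_not_mem h2]
  · rw [lcomp_apply_of_not_mem (fun h => h1 (AddSubgroup.mem_inf.mp h).1),
      lcomp_apply_of_not_mem h1]

lemma lcomp_eq_of_agree {T T' : AddSubgroup (Fin n → ℤ)} {c : Fin n → ℤ}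
    {a : LaurentAlg F n} (h : ∀ y ∈ a.coeff.support, (y - c ∈ T ↔ y - c ∈ T')) :
    lcomp T c a = lcomp T' c a := by
  ext y
  by_cases hy : a.coeff y = 0
  · by_cases h1 : y - c ∈ T <;> by_cases h2 : y - c ∈ T' <;>
      simp only [lcomp_apply_of_mem, lcomp_apply_of_not_mem, h1, h2, hy,
        not_false_iff]
  · have hmem := Finsupp.mem_support_iff.mpr hy
    by_cases h1 : y - c ∈ T
    · rw [lcomp_apply_of_mem h1, lcomp_apply_of_mem ((h y hmem).mp h1)]
    · rw [lcomp_apply_of_not_mem h1,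
        lcomp_apply_of_not_mem (fun h2 => h1 ((h y hmem).mpr h2))]

lemma lcomp_single_mul (T : AddSubgroup (Fin n → ℤ)) (c x : Fin n → ℤ) (r : F)
    (a : LaurentAlg F n) :
    lcomp T c (AddMonoidAlgebra.single x r * a)
      = AddMonoidAlgebra.single x r * lcomp T (c - x) a := by
  ext y
  have hxy : (-x + y) - (c - x) = y - c := by abel
  by_cases h : y - c ∈ T
  · rw [lcomp_apply_of_mem h, AddMonoidAlgebra.coeff_single_mul_apply,
      AddMonoidAlgebra.coeff_single_mul_apply, lcomp_apply_of_mem (hxy ▸ h)]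
  · rw [lcomp_apply_of_not_mem h, AddMonoidAlgebra.coeff_single_mul_apply,
      lcomp_apply_of_not_mem (hxy ▸ h), mul_zero]


lemma inclMap_apply (B : Subalgebra F (LaurentAlg F n)) (q : Fin k → B) (i : Fin k) :
    inclMap B k q i = (q i : LaurentAlg F n) := rfl

/-- Subalgebra of elements supported in `T`. -/
noncomputable def suppInAlg (T : AddSubgroup (Fin n → ℤ)) : Subalgebra F (LaurentAlg F n) where
  carrier := {a : LaurentAlg F n | ∀ y ∈ a.coeff.support, y ∈ T}
  mul_mem' := by
    intro a b ha hb y hy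
    have h := AddMonoidAlgebra.support_coeff_mul_subset a b hy
    rw [Finset.mem_add] at h
    obtain ⟨p, hp, q, hq, rfl⟩ := h
    exact T.add_mem (ha p hp) (hb q hq)
  add_mem' := by
    intro a b ha hb y hy
    have h := Finsupp.support_add (g₁ := a.coeff) (g₂ := b.coeff) hy
    rw [Finset.mem_union] at h
    rcases h with h | h
    · exact ha y h
    · exact hb y h
  one_mem' := by
    intro y hy
    rw [AddMonoidAlgebra.one_def, AddMonoidAlgebra.coeff_single] at hy
    have := Finsupp.support_single_subset hy
    rw [Finset.mem_singleton] at this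
    rw [this]; exact T.zero_mem
  algebraMap_mem' := by
    intro r y hy
    have h1 : (algebraMap F (LaurentAlg F n) r) = AddMonoidAlgebra.single 0 r := by
      rw [AddMonoidAlgebra.coe_algebraMap]; rfl
    rw [h1, AddMonoidAlgebra.coeff_single] at hy
    have := Finsupp.support_single_subset hy
    rw [Finset.mem_singleton] at this
    rw [this]; exact T.zero_mem

lemma mem_monoAlg_iff {T : AddSubgroup (Fin n → ℤ)} {a : LaurentAlg F n} :
    a ∈ monoAlg F T ↔ ∀ y ∈ a.coeff.support, y ∈ T := by
  constructor
  · intro h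
    have hle : monoAlg F T ≤ suppInAlg T := by
      apply Algebra.adjoin_le
      rintro _ ⟨x, hx, rfl⟩ y hy
      rw [mono, AddMonoidAlgebra.coeff_single] at hy
      have := Finsupp.support_single_subset hy
      rw [Finset.mem_singleton] at this
      rw [this]; exact hx
    exact hle h
  · intro h
    have ha : a = ∑ y ∈ a.coeff.support, AddMonoidAlgebra.single y (a.coeff y) :=
      (AddMonoidAlgebra.sum_coeff_single a).symm
    rw [ha]
    refine Subalgebra.sum_mem _ fun y hy => ?_
    have h1 : AddMonoidAlgebra.single y (a.coeff y) = (a.coeff y) • mono F y := by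
      rw [mono, AddMonoidAlgebra.smul_single, smul_eq_mul, mul_one]
    rw [h1]
    have hmem : mono F y ∈ {a : LaurentAlg F n | ∃ x ∈ T, a = mono F x} := ⟨y, h y hy, rfl⟩
    exact Subalgebra.smul_mem _ (Algebra.subset_adjoin hmem) _

/-- `P` is `T`-graded (pointwise form). -/
def Graded (P : Submodule (LaurentAlg F n) (Fin k → LaurentAlg F n))
    (T : AddSubgroup (Fin n → ℤ)) : Prop :=
  ∀ v ∈ P, ∀ c : Fin n → ℤ, (fun i => lcomp T c (v i)) ∈ P

lemma graded_top (P : Submodule (LaurentAlg F n) (Fin k → LaurentAlg F n)) :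
    Graded P ⊤ := by
  intro v hv c
  have : (fun i => lcomp (⊤ : AddSubgroup (Fin n → ℤ)) c (v i)) = v := by
    funext i; exact lcomp_top c (v i)
  rw [this]; exact hv

lemma graded_inf {P : Submodule (LaurentAlg F n) (Fin k → LaurentAlg F n)}
    {T T' : AddSubgroup (Fin n → ℤ)} (h : Graded P T) (h' : Graded P T') :
    Graded P (T ⊓ T') := by
  intro v hv c
  have heq : (fun i => lcomp (T ⊓ T') c (v i))
      = fun i => lcomp T c (lcomp T' c (v i)) := by
    funext i; exact lcomp_inf T T' c (v i)
  rw [heq]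
  exact h _ (h' v hv c) c

lemma graded_finsetInf {P : Submodule (LaurentAlg F n) (Fin k → LaurentAlg F n)}
    {ι : Type*} [DecidableEq ι] (E : Finset ι) (f : ι → AddSubgroup (Fin n → ℤ))
    (h : ∀ x ∈ E, Graded P (f x)) : Graded P (E.inf f) := by
  induction E using Finset.induction_on with
  | empty => rw [Finset.inf_empty]; exact graded_top P
  | @insert a s hx ih =>
    rw [Finset.inf_insert]
    exact graded_inf (h a (Finset.mem_insert_self a s))
      (ih fun x hxs => h x (Finset.mem_insert_of_mem hxs))

lemma extendTo_contrTo_le (B : Subalgebra F (LaurentAlg F n))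
    (P : Submodule (LaurentAlg F n) (Fin k → LaurentAlg F n)) :
    extendTo B (contrTo B P) ≤ P := by
  rw [extendTo, Submodule.span_le]
  rintro _ ⟨q, hq, rfl⟩
  exact hq


lemma graded_extendTo (T : AddSubgroup (Fin n → ℤ))
    (Q : Submodule (monoAlg F T) (Fin k → monoAlg F T)) :
    Graded (extendTo (monoAlg F T) Q) T := by
  intro v hv
  rw [extendTo] at hv ⊢
  induction hv using Submodule.span_induction with
  | mem u hu =>
    obtain ⟨q, _, rfl⟩ := hu
    intro c
    by_cases hc : c ∈ T
    · have heq : (fun i => lcomp T c (inclMap (monoAlg F T) k q i))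
          = inclMap (monoAlg F T) k q := by
        funext i
        ext y
        by_cases hy : (inclMap (monoAlg F T) k q i).coeff y = 0
        · by_cases hyc : y - c ∈ T
          · rw [lcomp_apply_of_mem hyc]
          · rw [lcomp_apply_of_not_mem hyc, hy]
        · have hyT : y ∈ T := by
            have := mem_monoAlg_iff.mp (q i).2
            exact this y (Finsupp.mem_support_iff.mpr hy)
          exact lcomp_apply_of_mem (T.sub_mem hyT hc) _
      rw [heq]
      exact Submodule.subset_span ⟨q, ‹_›, rfl⟩
    · have heq : (fun i => lcomp T c (inclMap (monoAlg F T) k q i))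
          = (0 : Fin k → LaurentAlg F n) := by
        funext i
        ext y
        by_cases hyc : y - c ∈ T
        · rw [lcomp_apply_of_mem hyc]
          by_contra hy
          have hyT : y ∈ T := by
            have := mem_monoAlg_iff.mp (q i).2
            exact this y (Finsupp.mem_support_iff.mpr hy)
          exact hc (by have := T.sub_mem hyT hyc; simpa using this)
        · rw [lcomp_apply_of_not_mem hyc]; rfl
      rw [heq]
      exact Submodule.zero_mem _
  | zero =>
    intro c
    have heq : (fun i => lcomp T c ((0 : Fin k → LaurentAlg F n) i))
        = (0 : Fin k → LaurentAlg F n) := by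
      funext i; simp only [Pi.zero_apply, map_zero]
    rw [heq]; exact Submodule.zero_mem _
  | add x y hx hy ihx ihy =>
    intro c
    have heq : (fun i => lcomp T c ((x + y) i))
        = (fun i => lcomp T c (x i)) + (fun i => lcomp T c (y i)) := by
      funext i; simp only [Pi.add_apply, map_add]
    rw [heq]
    exact Submodule.add_mem _ (ihx c) (ihy c)
  | smul a u hu ihu =>
    intro c
    have heq : (fun i => lcomp T c ((a • u) i))
        = ∑ x ∈ a.coeff.support, AddMonoidAlgebra.single x (a.coeff x) • fun i => lcomp T (c - x) (u i) := by
      funext i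
      rw [Finset.sum_apply]
      have h1 : (a • u) i = a * u i := rfl
      have h2 : a * u i = ∑ x ∈ a.coeff.support, AddMonoidAlgebra.single x (a.coeff x) * u i := by
        conv_lhs => rw [← AddMonoidAlgebra.sum_coeff_single a]
        rw [Finsupp.sum, Finset.sum_mul]
      rw [h1, h2, map_sum]
      refine Finset.sum_congr rfl fun x _ => ?_
      rw [lcomp_single_mul]
      rfl
    rw [heq]
    exact Submodule.sum_mem _ fun x _ => Submodule.smul_mem _ _ (ihu (c - x))

lemma le_extendTo_of_graded {T : AddSubgroup (Fin n → ℤ)}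
    {P : Submodule (LaurentAlg F n) (Fin k → LaurentAlg F n)} (hgr : Graded P T) :
    P ≤ extendTo (monoAlg F T) (contrTo (monoAlg F T) P) := by
  classical
  intro v hv
  set E : Finset (Fin n → ℤ) := Finset.univ.biUnion (fun i : Fin k => (v i).coeff.support) with hE
  set D : Finset ((Fin n → ℤ) ⧸ T) := E.image (QuotientAddGroup.mk) with hD
  have key : ∀ (y : Fin n → ℤ) (d : (Fin n → ℤ) ⧸ T),
      ((QuotientAddGroup.mk y : (Fin n → ℤ) ⧸ T) = d) ↔ y - Quotient.out d ∈ T := by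
    intro y d
    constructor
    · intro h
      have h2 : (QuotientAddGroup.mk y : (Fin n → ℤ) ⧸ T)
          = QuotientAddGroup.mk (Quotient.out d) := by
        rw [h, QuotientAddGroup.out_eq']
      have h3 := QuotientAddGroup.eq.mp h2
      have h4 : y - Quotient.out d = -(-y + Quotient.out d) := by abel
      rw [h4]; exact T.neg_mem h3
    · intro h
      rw [← QuotientAddGroup.out_eq' d]
      apply QuotientAddGroup.eq.mpr
      have h4 : -y + Quotient.out d = -(y - Quotient.out d) := by abel
      rw [h4]; exact T.neg_mem h
  have hdecomp : v = ∑ d ∈ D, (fun i => lcomp T (Quotient.out d) (v i)) := by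
    funext i
    ext y
    rw [Finset.sum_apply, AddMonoidAlgebra.coeff_sum, Finsupp.finset_sum_apply]
    have hterm : ∀ d ∈ D, (lcomp T (Quotient.out d) (v i)).coeff y
        = if (QuotientAddGroup.mk y : (Fin n → ℤ) ⧸ T) = d then (v i).coeff y else 0 := by
      intro d _
      by_cases h : y - Quotient.out d ∈ T
      · rw [lcomp_apply_of_mem h, if_pos ((key y d).mpr h)]
      · rw [lcomp_apply_of_not_mem h, if_neg (fun hc => h ((key y d).mp hc))]
    rw [Finset.sum_congr rfl hterm,
      Finset.sum_ite_eq D (QuotientAddGroup.mk y) (fun _ => (v i).coeff y)]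
    by_cases hy : (v i).coeff y = 0
    · split_ifs <;> simp [hy]
    · rw [if_pos]
      apply Finset.mem_image_of_mem
      rw [hE, Finset.mem_biUnion]
      exact ⟨i, Finset.mem_univ i, Finsupp.mem_support_iff.mpr hy⟩
  rw [hdecomp]
  refine Submodule.sum_mem _ fun d _ => ?_
  set c := Quotient.out d with hc
  have hw : (fun i => lcomp T c (v i)) ∈ P := hgr v hv c
  have hsupp : ∀ i, mono F (-c) * lcomp T c (v i) ∈ monoAlg F T := by
    intro i
    rw [mem_monoAlg_iff]
    intro y hy
    by_contra hyT
    apply Finsupp.mem_support_iff.mp hy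
    rw [mono, AddMonoidAlgebra.coeff_single_mul_apply, one_mul]
    apply lcomp_apply_of_not_mem
    intro hmem
    apply hyT
    have : - -c + y - c = y := by abel
    rwa [this] at hmem
  set q : Fin k → monoAlg F T := fun i => ⟨mono F (-c) * lcomp T c (v i), hsupp i⟩ with hqdef
  have hq : q ∈ contrTo (monoAlg F T) P := by
    show inclMap (monoAlg F T) k q ∈ P
    have heq : inclMap (monoAlg F T) k q = mono F (-c) • fun i => lcomp T c (v i) := by
      funext i; rfl
    rw [heq]
    exact P.smul_mem _ hw
  have hfinal : (fun i => lcomp T c (v i)) = mono F c • inclMap (monoAlg F T) k q := by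
    funext i
    show lcomp T c (v i) = mono F c * (mono F (-c) * lcomp T c (v i))
    rw [← mul_assoc, mono, mono, AddMonoidAlgebra.single_mul_single, mul_one,
      add_neg_cancel, ← AddMonoidAlgebra.one_def, one_mul]
  rw [hfinal]
  exact Submodule.smul_mem _ _ (Submodule.subset_span ⟨q, hq, rfl⟩)


lemma algebraMap_eq_single (r : F) :
    algebraMap F (LaurentAlg F n) r = AddMonoidAlgebra.single (0 : Fin n → ℤ) r := by
  rw [AddMonoidAlgebra.coe_algebraMap]; rfl

end Aux

/-- There is a unique coarsest sublattice `S` of `ℤⁿ` such that `P`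
equals the extension of its contraction to `A_Sᵏ`; `S = 0` exactly when `P` is a
constant submodule. -/
theorem exists_unique_coarsest_lattice_of_definition
    {F : Type*} [Field F] [IsAlgClosed F] [CharZero F] {n k : ℕ} (hn : 0 < n) (hk : 1 ≤ k)
    (P : Submodule (LaurentAlg F n) (Fin k → LaurentAlg F n)) :
    ∃ S : AddSubgroup (Fin n → ℤ),
      extendTo (monoAlg F S) (contrTo (monoAlg F S) P) = P ∧
      (∀ T : AddSubgroup (Fin n → ℤ),
        extendTo (monoAlg F T) (contrTo (monoAlg F T) P) = P → S ≤ T) ∧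
      (∀ S' : AddSubgroup (Fin n → ℤ),
        (extendTo (monoAlg F S') (contrTo (monoAlg F S') P) = P ∧
          ∀ T : AddSubgroup (Fin n → ℤ),
            extendTo (monoAlg F T) (contrTo (monoAlg F T) P) = P → S' ≤ T) →
        S' = S) ∧
      (S = ⊥ ↔
        ∃ T : Set (Fin k → LaurentAlg F n),
          (∀ v ∈ T, ∀ i, v i ∈ (algebraMap F (LaurentAlg F n)).range) ∧
          P = Submodule.span (LaurentAlg F n) T) := by
  classical
  set Λ : Set (AddSubgroup (Fin n → ℤ)) :=
    {T | extendTo (monoAlg F T) (contrTo (monoAlg F T) P) = P} with hΛ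
  set S := sInf Λ with hSdef
  have hgrΛ : ∀ T ∈ Λ, Graded P T := by
    intro T hT
    have h := graded_extendTo (F := F) T (contrTo (monoAlg F T) P)
    rwa [show extendTo (monoAlg F T) (contrTo (monoAlg F T) P) = P from hT] at h
  have hgrS : Graded P S := by
    intro v hv c
    set E : Finset (Fin n → ℤ) := Finset.univ.biUnion (fun i : Fin k => (v i).coeff.support) with hE
    have hchoice : ∀ z : Fin n → ℤ, ∃ T' : AddSubgroup (Fin n → ℤ),
        (T' ∈ Λ ∨ T' = ⊤) ∧ S ≤ T' ∧ (z ∉ S → z ∉ T') := by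
      intro z
      by_cases hz : z ∈ S
      · exact ⟨⊤, Or.inr rfl, le_top, fun h => absurd hz h⟩
      · have hex : ∃ T ∈ Λ, z ∉ T := by
          by_contra hcon
          push_neg at hcon
          exact hz (AddSubgroup.mem_sInf.mpr hcon)
        obtain ⟨T, hT, hzT⟩ := hex
        exact ⟨T, Or.inl hT, sInf_le hT, fun _ => hzT⟩
    choose f hf1 hf2 hf3 using hchoice
    set T' := E.inf (fun x => f (x - c)) with hT'
    have hgrT' : Graded P T' := by
      refine graded_finsetInf E _ (fun x _ => ?_)
      rcases hf1 (x - c) with h | h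
      · exact hgrΛ _ h
      · rw [h]; exact graded_top P
    have hST' : S ≤ T' := Finset.le_inf (fun x _ => hf2 (x - c))
    have hagree : (fun i => lcomp S c (v i)) = fun i => lcomp T' c (v i) := by
      funext i
      apply lcomp_eq_of_agree
      intro y hy
      have hyE : y ∈ E := Finset.mem_biUnion.mpr ⟨i, Finset.mem_univ i, hy⟩
      constructor
      · intro h; exact hST' h
      · intro h
        by_contra hS'
        exact (hf3 (y - c) hS') ((Finset.inf_le hyE : T' ≤ f (y - c)) h)
    rw [hagree]
    exact hgrT' v hv c
  have hSmem : extendTo (monoAlg F S) (contrTo (monoAlg F S) P) = P :=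
    le_antisymm (extendTo_contrTo_le _ _) (le_extendTo_of_graded hgrS)
  refine ⟨S, hSmem, fun T hT => sInf_le hT, ?_, ?_⟩
  · rintro S' ⟨h1, h2⟩
    exact le_antisymm (h2 S hSmem) (sInf_le h1)
  · constructor
    · intro hbot
      have hbotmem : extendTo (monoAlg F (⊥ : AddSubgroup (Fin n → ℤ)))
          (contrTo (monoAlg F ⊥) P) = P := hbot ▸ hSmem
      refine ⟨inclMap (monoAlg F (⊥ : AddSubgroup (Fin n → ℤ))) k
          '' (contrTo (monoAlg F ⊥) P), ?_, ?_⟩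
      · rintro _ ⟨q, _, rfl⟩ i
        rw [inclMap_apply]
        have hsupp : ((q i : LaurentAlg F n)).coeff.support ⊆ {0} := by
          intro y hy
          have h := mem_monoAlg_iff.mp (q i).2 y hy
          rw [AddSubgroup.mem_bot] at h
          rw [Finset.mem_singleton]
          exact h
        have heq := Finsupp.support_subset_singleton.mp hsupp
        exact ⟨(q i : LaurentAlg F n).coeff 0, by
            rw [algebraMap_eq_single]; exact AddMonoidAlgebra.ext heq.symm⟩
      · exact hbotmem.symm
    · rintro ⟨Tset, hconst, hPspan⟩
      have hbotΛ : extendTo (monoAlg F (⊥ : AddSubgroup (Fin n → ℤ)))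
          (contrTo (monoAlg F ⊥) P) = P := by
        refine le_antisymm (extendTo_contrTo_le _ _) ?_
        have hle : Tset ⊆ ↑(extendTo (monoAlg F (⊥ : AddSubgroup (Fin n → ℤ)))
            (contrTo (monoAlg F ⊥) P)) := by
          intro t ht
          have hmem : ∀ i, t i ∈ monoAlg F (⊥ : AddSubgroup (Fin n → ℤ)) := by
            intro i
            obtain ⟨r, hr⟩ := hconst t ht i
            rw [mem_monoAlg_iff]
            intro y hy
            rw [← hr, algebraMap_eq_single, AddMonoidAlgebra.coeff_single] at hy
            have := Finsupp.support_single_subset hy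
            rw [Finset.mem_singleton] at this
            rw [this]; exact AddSubgroup.zero_mem _
          set q : Fin k → monoAlg F (⊥ : AddSubgroup (Fin n → ℤ)) :=
            fun i => ⟨t i, hmem i⟩ with hq
          have hqt : inclMap (monoAlg F (⊥ : AddSubgroup (Fin n → ℤ))) k q = t := by
            funext i; rw [inclMap_apply]
          have hqc : q ∈ contrTo (monoAlg F (⊥ : AddSubgroup (Fin n → ℤ))) P := by
            rw [contrTo, Submodule.mem_comap, Submodule.restrictScalars_mem, hqt, hPspan]
            exact Submodule.subset_span ht
          exact Submodule.subset_span ⟨q, hqc, hqt⟩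
        calc P = Submodule.span (LaurentAlg F n) Tset := hPspan
          _ ≤ _ := Submodule.span_le.mpr hle
      have hle : S ≤ ⊥ := sInf_le hbotΛ
      exact le_bot_iff.mp hle
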